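/- arXiv:1812.08569 — 3 statements merged into one kernel-verified Lean document; each statement's English description precedes it below -/
import Mathlib

section
/- For distinct duplication nodes u and v of a dup-tree M, the conjugate subtrees associated with u are vertex-disjoint from the conjugate subtrees associated with v. -/
/-- Degree of a vertex in a simple graph (cardinality of its neighbor set). -/
noncomputable def vdeg {V : Type*} (G : SimpleGraph V) (v : V) : ℕ :=
  Nat.card {u // G.Adj v u}

/-- A binary unrooted leaf-labeled tree over the label set `Fin k`: a finite
connected acyclic simple graph in which exactly the degree-1 vertices (leaves)
carry labels, every internal vertex has degree 3, and every label is used on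
at least one and at most two leaves (a *dup-tree*). -/
structure ULT (k : ℕ) where
  V : Type
  fin : Finite V
  G : SimpleGraph V
  conn : G.Connected
  acyc : G.IsAcyclic
  lab : V → Option (Fin k)
  lab_leaf : ∀ v, (lab v).isSome ↔ vdeg G v = 1
  internal3 : ∀ v, lab v = none → vdeg G v = 3
  mult : ∀ x : Fin k, 1 ≤ Nat.card {v // lab v = some x} ∧
      Nat.card {v // lab v = some x} ≤ 2

/-- Number of leaves of `T` carrying the label `x`. -/
noncomputable def labCount {k : ℕ} (T : ULT k) (x : Fin k) : ℕ :=
  Nat.card {v // T.lab v = some x}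

/-- `T` is a phylogenetic tree: every label is used exactly once. -/
def isPhylo {k : ℕ} (T : ULT k) : Prop := ∀ x : Fin k, labCount T x = 1

/-- Label-preserving isomorphism of labeled trees. -/
def ULT.Iso {k : ℕ} (T₁ T₂ : ULT k) : Prop :=
  ∃ e : T₁.V ≃ T₂.V, (∀ a b, T₁.G.Adj a b ↔ T₂.G.Adj (e a) (e b)) ∧
    ∀ v, T₂.lab (e v) = T₁.lab v

/-- The number of isomorphism classes of labeled trees over `Fin k`
satisfying the property `P`. -/
noncomputable def countULT {k : ℕ} (P : ULT k → Prop) : ℕ :=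
  Nat.card (Quot (fun a b : {T : ULT k // P T} => ULT.Iso a.1 b.1))

/-- `(u, a, b)` is a twin-cherry: two distinct leaves `a`, `b` adjacent to a
common node `u` and carrying the same label. -/
def twinCherry {k : ℕ} (T : ULT k) (u a b : T.V) : Prop :=
  a ≠ b ∧ T.G.Adj u a ∧ T.G.Adj u b ∧ (T.lab a).isSome ∧ T.lab a = T.lab b

/-- `T` contains no twin-cherry. -/
def tcFree {k : ℕ} (T : ULT k) : Prop := ∀ u a b, ¬ twinCherry T u a b
/-- The hanging subtree `M_u(v)`: the set of vertices reachable from `v`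
without passing through `u`. -/
def hang {k : ℕ} (T : ULT k) (u v : T.V) : Set T.V :=
  {w | Relation.ReflTransGen (fun a b => T.G.Adj a b ∧ b ≠ u) v w}

theorem mem_hang_self {k : ℕ} (T : ULT k) (u v : T.V) : v ∈ hang T u v :=
  Relation.ReflTransGen.refl

/-- `u` is a duplication node with conjugate subtrees `hang T u v'` and
`hang T u v''`: the two hanging subtrees are isomorphic as rooted
leaf-labeled trees via an isomorphism sending `v'` to `v''`. -/
def ConjAt {k : ℕ} (T : ULT k) (u v' v'' : T.V) : Prop :=
  v' ≠ v'' ∧ T.G.Adj u v' ∧ T.G.Adj u v'' ∧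
  ∃ f : hang T u v' ≃ hang T u v'',
    (f ⟨v', mem_hang_self T u v'⟩ : T.V) = v'' ∧
    (∀ a b : hang T u v', (T.G.Adj a.1 b.1 ↔ T.G.Adj (f a).1 (f b).1)) ∧
    (∀ a : hang T u v', T.lab (f a).1 = T.lab a.1)



def hang' {V : Type} (G : SimpleGraph V) (u v : V) : Set V :=
  {w | Relation.ReflTransGen (fun a b => G.Adj a b ∧ b ≠ u) v w}

section
variable {V : Type} {G : SimpleGraph V} {u v w x : V}

open SimpleGraph

lemma hang'_ne (hv : v ≠ u) (hw : w ∈ hang' G u v) : w ≠ u := by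
  induction hw with
  | refl => exact hv
  | tail h₁ h₂ => exact h₂.2

lemma notMem_hang' (hv : v ≠ u) : u ∉ hang' G u v := fun h => hang'_ne hv h rfl

lemma hang'_adj (ha : w ∈ hang' G u v) (hadj : G.Adj w x) (hx : x ≠ u) :
    x ∈ hang' G u v := Relation.ReflTransGen.tail ha ⟨hadj, hx⟩

lemma hang'_to_walk (h : w ∈ hang' G u v) (hv : v ≠ u) :
    ∃ p : G.Walk v w, u ∉ p.support := by
  induction h with
  | refl => exact ⟨SimpleGraph.Walk.nil, by simp [hv.symm]⟩
  | tail h₁ h₂ ih =>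
      obtain ⟨p, hp⟩ := ih
      refine ⟨p.concat h₂.1, ?_⟩
      rw [SimpleGraph.Walk.support_concat]
      simp only [List.concat_eq_append, List.mem_append, List.mem_singleton]
      rintro (h | h)
      · exact hp h
      · exact h₂.2 h.symm

lemma walk_to_hang' (p : G.Walk v w) (h : u ∉ p.support) : w ∈ hang' G u v := by
  induction p with
  | nil => exact Relation.ReflTransGen.refl
  | cons hadj q ih =>
      rw [SimpleGraph.Walk.support_cons] at h
      simp only [List.mem_cons, not_or] at h
      exact Relation.ReflTransGen.head ⟨hadj, fun hh => h.2 (hh ▸ q.start_mem_support)⟩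
        (ih h.2)

lemma support_subset_hang' (p : G.Walk v w) (h : u ∉ p.support) :
    ∀ x ∈ p.support, x ∈ hang' G u v := by
  classical
  intro x hx
  exact walk_to_hang' (p.takeUntil x hx)
    (fun hu => h (SimpleGraph.Walk.support_takeUntil_subset p hx hu))

/-- distinct hanging subtrees at a common node are disjoint (tree) -/
lemma hang'_disj (hac : G.IsAcyclic) (h1 : G.Adj u v) (h2 : G.Adj u w) (hvw : v ≠ w)
    (hx1 : x ∈ hang' G u v) (hx2 : x ∈ hang' G u w) : False := by
  classical
  obtain ⟨p, hp⟩ := hang'_to_walk hx1 h1.ne'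
  obtain ⟨q, hq⟩ := hang'_to_walk hx2 h2.ne'
  set W1 : G.Walk v w := p.append q.reverse with hW1
  have hW1u : u ∉ W1.support := by
    rw [hW1, SimpleGraph.Walk.mem_support_append_iff]
    simp only [SimpleGraph.Walk.support_reverse, List.mem_reverse]
    tauto
  have hW2 : (SimpleGraph.Walk.cons h1.symm (SimpleGraph.Walk.cons h2 SimpleGraph.Walk.nil) :
      G.Walk v w).IsPath := by
    simp [SimpleGraph.Walk.isPath_def, h1.ne, h2.ne', hvw, h1.ne', h2.ne]
  have := SimpleGraph.isAcyclic_iff_path_unique.mp hac W1.toPath ⟨_, hW2⟩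
  have hu : u ∈ (W1.toPath : G.Walk v w).support := by
    rw [this]; simp
  exact hW1u (SimpleGraph.Walk.support_bypass_subset _ hu)

/-- nesting lemma -/
lemma hang'_subset {u₁ v₁ u₂ v₂ : V} (h₁ : v₁ ≠ u₁) (h₂ : v₂ ≠ u₂) (hu₂ : u₂ ∉ hang' G u₁ v₁)
    (hw₁ : w ∈ hang' G u₁ v₁) (hw₂ : w ∈ hang' G u₂ v₂) :
    hang' G u₁ v₁ ⊆ hang' G u₂ v₂ := by
  intro x hx
  obtain ⟨p, hp⟩ := hang'_to_walk hw₁ h₁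
  obtain ⟨q, hq⟩ := hang'_to_walk hx h₁
  obtain ⟨r, hr⟩ := hang'_to_walk hw₂ h₂
  refine walk_to_hang' (r.append (p.reverse.append q)) ?_
  rw [SimpleGraph.Walk.mem_support_append_iff, SimpleGraph.Walk.mem_support_append_iff]
  simp only [SimpleGraph.Walk.support_reverse, List.mem_reverse]
  rintro (h | h | h)
  · exact hr h
  · exact hu₂ (support_subset_hang' p hp u₂ h)
  · exact hu₂ (support_subset_hang' q hq u₂ h)

end

section ULTlemmas
variable {k : ℕ} {T : ULT k}

lemma hang_eq_hang' (u v : T.V) : hang T u v = hang' T.G u v := rfl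

lemma ConjAt.symm {u a b : T.V} (h : ConjAt T u a b) : ConjAt T u b a := by
  obtain ⟨hne, hadj1, hadj2, f, hf, hadjf, hlabf⟩ := h
  refine ⟨hne.symm, hadj2, hadj1, f.symm, ?_, ?_, ?_⟩
  · have : f ⟨a, mem_hang_self T u a⟩ = ⟨b, mem_hang_self T u b⟩ := Subtype.ext hf
    rw [← this, Equiv.symm_apply_apply]
  · intro x y
    have := hadjf (f.symm x) (f.symm y)
    simpa using this.symm
  · intro x
    have := hlabf (f.symm x)
    simpa using this.symm

lemma hang_disjoint {u a b : T.V} (h1 : T.G.Adj u a) (h2 : T.G.Adj u b) (hab : a ≠ b)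
    {x : T.V} (hx1 : x ∈ hang T u a) (hx2 : x ∈ hang T u b) : False :=
  hang'_disj T.acyc h1 h2 hab hx1 hx2

/-- the twin of a vertex in a conjugate subtree -/
lemma twin_exists {u a b : T.V} (h : ConjAt T u a b) {x : T.V} (hx : x ∈ hang T u a) :
    ∃ y ∈ hang T u b, y ≠ x ∧ T.lab y = T.lab x := by
  obtain ⟨hne, hadj1, hadj2, f, hf, hadjf, hlabf⟩ := h
  refine ⟨(f ⟨x, hx⟩).1, (f ⟨x, hx⟩).2, ?_, hlabf ⟨x, hx⟩⟩
  intro hy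
  exact hang_disjoint hadj1 hadj2 hne hx (hy ▸ (f ⟨x, hx⟩).2)

lemma conj_card {u a b : T.V} (h : ConjAt T u a b) :
    (hang T u a).ncard = (hang T u b).ncard := by
  obtain ⟨-, -, -, f, -⟩ := h
  rw [← Nat.card_coe_set_eq, ← Nat.card_coe_set_eq]
  exact Nat.card_congr f

lemma exists_internal_nbr {v : T.V} (hv : T.lab v = none) (u : T.V) :
    ∃ y, T.G.Adj v y ∧ y ≠ u := by
  have h3 := T.internal3 v hv
  by_contra hc
  push_neg at hc
  have hsub : {y | T.G.Adj v y} ⊆ {u} := fun y hy => hc y hy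
  have : Nat.card {y // T.G.Adj v y} ≤ 1 := by
    rw [show {y // T.G.Adj v y} = ↥{y | T.G.Adj v y} from rfl, Nat.card_coe_set_eq]
    calc ({y | T.G.Adj v y}).ncard ≤ ({u} : Set T.V).ncard :=
          Set.ncard_le_ncard hsub (Set.finite_singleton u)
      _ = 1 := Set.ncard_singleton u
  rw [vdeg] at h3
  omega

/-- every hanging subtree contains a leaf -/
lemma exists_leaf_aux : ∀ n (u v : T.V), (hang T u v).ncard ≤ n → T.G.Adj u v →
    ∃ ℓ ∈ hang T u v, (T.lab ℓ).isSome := by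
  have _ : Finite T.V := T.fin
  intro n
  induction n with
  | zero =>
      intro u v hn _
      exfalso
      have : (hang T u v).ncard ≠ 0 := by
        rw [Ne, Set.ncard_eq_zero (Set.toFinite _), ← Set.not_nonempty_iff_eq_empty]
        simp only [not_not]
        exact ⟨v, mem_hang_self T u v⟩
      omega
  | succ n ih =>
      intro u v hn hadj
      cases hlab : T.lab v with
      | some x => exact ⟨v, mem_hang_self T u v, by simp [hlab]⟩
      | none =>
          obtain ⟨y, hvy, hyu⟩ := exists_internal_nbr hlab u
          have huy : u ∉ hang T v y := fun hu =>
            hang_disjoint hvy hadj.symm hyu hu (mem_hang_self T v u)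
          have hyuv : y ∈ hang T u v :=
            hang'_adj (mem_hang_self T u v) hvy hyu
          have hsub : hang T v y ⊆ hang T u v :=
            hang'_subset hvy.ne' hadj.ne' huy (mem_hang_self T v y) hyuv
          have hss : hang T v y ⊂ hang T u v :=
            ⟨hsub, fun hsub' => notMem_hang' hvy.ne' (hsub' (mem_hang_self T u v))⟩
          have hlt : (hang T v y).ncard < (hang T u v).ncard :=
            Set.ncard_lt_ncard hss (Set.toFinite _)
          obtain ⟨ℓ, hℓ, hℓs⟩ := ih v y (by omega) hvy
          exact ⟨ℓ, hsub hℓ, hℓs⟩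

lemma exists_leaf {u v : T.V} (hadj : T.G.Adj u v) :
    ∃ ℓ ∈ hang T u v, (T.lab ℓ).isSome :=
  exists_leaf_aux (hang T u v).ncard u v le_rfl hadj

end ULTlemmas


section Main
variable {k : ℕ} {M : ULT k}

/-- cardinality contradiction case: `u₂` inside a conjugate of `u₁` and
`u₁` inside a conjugate of `u₂`. -/
lemma caseB {u₁ v₁' v₁'' u₂ a b : M.V}
    (h₁ : ConjAt M u₁ v₁' v₁'') (h₂ : ConjAt M u₂ a b)
    (hin : u₂ ∈ hang M u₁ v₁') (hu₁ : u₁ ∈ hang M u₂ b) : False := by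
  have _ : Finite M.V := M.fin
  obtain ⟨hne₁, hadj₁', hadj₁'', -⟩ := id h₁
  obtain ⟨hab, haa, hbb, -⟩ := id h₂
  have hu₁a : u₁ ∉ hang M u₂ a := fun h => hang_disjoint haa hbb hab h hu₁
  have ha_ne : a ≠ u₁ := fun h => hu₁a (h ▸ mem_hang_self M u₂ a)
  have ha_in : a ∈ hang M u₁ v₁' := hang'_adj hin haa ha_ne
  have hsubA : hang M u₂ a ⊆ hang M u₁ v₁' :=
    hang'_subset haa.ne' hadj₁'.ne' hu₁a (mem_hang_self M u₂ a) ha_in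
  have hu₂1'' : u₂ ∉ hang M u₁ v₁'' :=
    fun h => hang_disjoint hadj₁' hadj₁'' hne₁ hin h
  have hv₁''ne : v₁'' ≠ u₂ := fun h => hu₂1'' (h ▸ mem_hang_self M u₁ v₁'')
  have hv₁''in : v₁'' ∈ hang M u₂ b := hang'_adj hu₁ hadj₁'' hv₁''ne
  have hsubB : hang M u₁ v₁'' ⊆ hang M u₂ b :=
    hang'_subset hadj₁''.ne' hbb.ne' hu₂1'' (mem_hang_self M u₁ v₁'') hv₁''in
  have hu₁ni : u₁ ∉ hang M u₁ v₁'' := notMem_hang' hadj₁''.ne'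
  have c1 : (hang M u₂ a).ncard ≤ (hang M u₁ v₁').ncard :=
    Set.ncard_le_ncard hsubA (Set.toFinite _)
  have c2 : (hang M u₁ v₁'').ncard < (hang M u₂ b).ncard :=
    Set.ncard_lt_ncard ⟨hsubB, fun h => hu₁ni (h hu₁)⟩ (Set.toFinite _)
  have e1 := conj_card h₁
  have e2 := conj_card h₂
  omega

lemma keyAux {u₁ v₁' v₁'' u₂ v₂' v₂'' : M.V}
    (h₁ : ConjAt M u₁ v₁' v₁'') (h₂ : ConjAt M u₂ v₂' v₂'')
    (hin : u₂ ∈ hang M u₁ v₁') : False := by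
  have _ : Finite M.V := M.fin
  obtain ⟨hne₁, hadj₁', hadj₁'', -⟩ := id h₁
  obtain ⟨hne₂, hadj₂', hadj₂'', -⟩ := id h₂
  by_cases hB : u₁ ∈ hang M u₂ v₂''
  · exact caseB h₁ h₂ hin hB
  by_cases hC : u₁ ∈ hang M u₂ v₂'
  · exact caseB h₁ h₂.symm hin hC
  -- case A: both conjugates of u₂ are inside hang M u₁ v₁'
  have hsub : ∀ c : M.V, M.G.Adj u₂ c → u₁ ∉ hang M u₂ c →
      hang M u₂ c ⊆ hang M u₁ v₁' := by
    intro c hc hu₁c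
    have hcne : c ≠ u₁ := fun h => hu₁c (h ▸ mem_hang_self M u₂ c)
    have hcin : c ∈ hang M u₁ v₁' := hang'_adj hin hc hcne
    exact hang'_subset hc.ne' hadj₁'.ne' hu₁c (mem_hang_self M u₂ c) hcin
  obtain ⟨ℓ, hℓ, hℓs⟩ := exists_leaf hadj₂'
  obtain ⟨t₂, ht₂m, ht₂ne, ht₂lab⟩ := twin_exists h₂ hℓ
  have hℓ1 : ℓ ∈ hang M u₁ v₁' := hsub v₂' hadj₂' hC hℓ
  obtain ⟨t₁, ht₁m, ht₁ne, ht₁lab⟩ := twin_exists h₁ hℓ1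
  obtain ⟨x, hx⟩ := Option.isSome_iff_exists.mp hℓs
  have hteq : t₁ = t₂ := by
    by_contra hd
    have h2c := (M.mult x).2
    have hsubS : ({ℓ, t₁, t₂} : Set M.V) ⊆ {v | M.lab v = some x} := by
      rintro y (rfl | rfl | rfl)
      · exact hx
      · rw [Set.mem_setOf_eq, ht₁lab, hx]
      · rw [Set.mem_setOf_eq, ht₂lab, hx]
    have h3 : ({ℓ, t₁, t₂} : Set M.V).ncard = 3 := by
      rw [Set.ncard_insert_of_notMem (by simp [Ne, ht₁ne.symm, ht₂ne.symm])
        (Set.toFinite _), Set.ncard_pair hd]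
    have hle : ({ℓ, t₁, t₂} : Set M.V).ncard ≤ Nat.card {v // M.lab v = some x} := by
      rw [show {v // M.lab v = some x} = ↥{v | M.lab v = some x} from rfl,
        Nat.card_coe_set_eq]
      exact Set.ncard_le_ncard hsubS (Set.toFinite _)
    omega
  exact hang_disjoint hadj₁' hadj₁'' hne₁ (hsub v₂'' hadj₂'' hB (hteq ▸ ht₂m)) ht₁m

lemma key {u₁ v₁' v₁'' u₂ v₂' v₂'' : M.V} (hne : u₁ ≠ u₂)
    (h₁ : ConjAt M u₁ v₁' v₁'') (h₂ : ConjAt M u₂ v₂' v₂'')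
    {w : M.V} (hw₁ : w ∈ hang M u₁ v₁') (hw₂ : w ∈ hang M u₂ v₂') : False := by
  by_cases hin : u₂ ∈ hang M u₁ v₁'
  · exact keyAux h₁ h₂ hin
  · have hsub : hang M u₁ v₁' ⊆ hang M u₂ v₂' :=
      hang'_subset h₁.2.1.ne' h₂.2.1.ne' hin hw₁ hw₂
    have hu₁ : u₁ ∈ hang M u₂ v₂' :=
      hang'_adj (hsub (mem_hang_self M u₁ v₁')) h₁.2.1.symm hne
    exact keyAux h₂ h₁ hu₁

end Main

/-- For distinct duplication nodes `u₁` and `u₂` of a dup-tree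
`M`, the conjugate subtrees associated with `u₁` are vertex-disjoint from the
conjugate subtrees associated with `u₂`. -/
theorem stmt9 (k : ℕ) (M : ULT k) (u₁ v₁' v₁'' u₂ v₂' v₂'' : M.V)
    (hne : u₁ ≠ u₂) (h₁ : ConjAt M u₁ v₁' v₁'') (h₂ : ConjAt M u₂ v₂' v₂'') :
    Disjoint (hang M u₁ v₁' ∪ hang M u₁ v₁'')
      (hang M u₂ v₂' ∪ hang M u₂ v₂'') := by
  rw [Set.disjoint_union_left]
  constructor <;> rw [Set.disjoint_union_right] <;> constructor <;>
    rw [Set.disjoint_left] <;> intro w hwa hwb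
  · exact absurd hwb fun h => key hne h₁ h₂ hwa h
  · exact absurd hwb fun h => key hne h₁ h₂.symm hwa h
  · exact absurd hwb fun h => key hne h₁.symm h₂ hwa h
  · exact absurd hwb fun h => key hne h₁.symm h₂.symm hwa h
end

section
/- A binary rooted phylogenetic network in which every reticulate node has exactly one leaf descendant, namely its child, is a 1-galled network (i.e., it is galled and has exactly one tree-component). -/
/-- In-degree of a vertex of a digraph. -/
noncomputable def indeg {V : Type*} (E : V → V → Prop) (v : V) : ℕ :=
  Nat.card {u // E u v}

/-- Out-degree of a vertex of a digraph. -/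
noncomputable def outdeg {V : Type*} (E : V → V → Prop) (v : V) : ℕ :=
  Nat.card {u // E v u}

/-- A binary rooted phylogenetic network over the taxon set `Fin n`:
a finite acyclic digraph with a unique root (indegree 0, outdegree 2,
every node reachable from it), exactly the leaves (indegree 1, outdegree 0)
are labeled, bijectively by `Fin n`, and every other non-root node is either
a tree node (indegree 1, outdegree 2) or a reticulate node (indegree 2,
outdegree 1). -/
structure RPN (n : ℕ) where
  V : Type
  fin : Finite V
  E : V → V → Prop
  root : V
  root_in : indeg E root = 0
  root_out : outdeg E root = 2
  acyclic : ∀ v, ¬ Relation.TransGen E v v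
  reach : ∀ v, Relation.ReflTransGen E root v
  lab : V → Option (Fin n)
  lab_leaf : ∀ v, (lab v).isSome ↔ (indeg E v = 1 ∧ outdeg E v = 0)
  lab_once : ∀ x : Fin n, ∃! v, lab v = some x
  nodes : ∀ v, v ≠ root → lab v = none →
    (indeg E v = 1 ∧ outdeg E v = 2) ∨ (indeg E v = 2 ∧ outdeg E v = 1)

/-- `v` is a reticulate node. -/
noncomputable def IsRet {n : ℕ} (N : RPN n) (v : N.V) : Prop :=
  indeg N.E v = 2 ∧ outdeg N.E v = 1

/-- `v` is a leaf. -/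
def IsLeaf {n : ℕ} (N : RPN n) (v : N.V) : Prop := (N.lab v).isSome

/-- `v` belongs to `N` minus its reticulate nodes and leaves
(i.e. `v` is a tree node or the root). -/
noncomputable def treeish {n : ℕ} (N : RPN n) (v : N.V) : Prop :=
  ¬ IsRet N v ∧ ¬ IsLeaf N v

/-- Two treeish nodes lie in a common tree-component: they are joined by a
path all of whose nodes are treeish. -/
noncomputable def sameTC {n : ℕ} (N : RPN n) (u v : {x : N.V // treeish N x}) : Prop :=
  Relation.ReflTransGen (fun a b : {x : N.V // treeish N x} => N.E a.1 b.1 ∨ N.E b.1 a.1) u v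

/-- `N` has exactly one tree-component. -/
noncomputable def OneTC {n : ℕ} (N : RPN n) : Prop :=
  ∀ u v : {x : N.V // treeish N x}, sameTC N u v

/-- `p` is a directed path: consecutive nodes joined by edges, no repeats. -/
def IsDiPath {V : Type*} (E : V → V → Prop) (p : List V) : Prop :=
  List.Chain' E p ∧ p.Nodup

/-- The (directed) edges traversed by a path, as consecutive pairs. -/
def pEdges {V : Type*} (p : List V) : List (V × V) := p.zip p.tail

/-- `N` is galled: every reticulate node `v` has an ancestor `a` with two
edge-disjoint directed paths from `a` to `v` containing no reticulate node
other than `v`. -/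
noncomputable def Galled {n : ℕ} (N : RPN n) : Prop :=
  ∀ v, IsRet N v → ∃ (a : N.V) (p q : List N.V),
    IsDiPath N.E p ∧ IsDiPath N.E q ∧
    p.head? = some a ∧ q.head? = some a ∧
    p.getLast? = some v ∧ q.getLast? = some v ∧
    2 ≤ p.length ∧ 2 ≤ q.length ∧
    (∀ e ∈ pEdges p, e ∉ pEdges q) ∧
    (∀ x ∈ p, IsRet N x → x = v) ∧ (∀ x ∈ q, IsRet N x → x = v)

/-- A 1-galled network: galled with exactly one tree-component. -/
noncomputable def OneGalled {n : ℕ} (N : RPN n) : Prop := Galled N ∧ OneTC N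

/-- Root- and label-preserving isomorphism of rooted networks. -/
def RPN.Iso {n : ℕ} (N₁ N₂ : RPN n) : Prop :=
  ∃ e : N₁.V ≃ N₂.V, (∀ a b, N₁.E a b ↔ N₂.E (e a) (e b)) ∧
    e N₁.root = N₂.root ∧ ∀ v, N₂.lab (e v) = N₁.lab v

/-- Number of isomorphism classes of networks over `Fin n` satisfying `P`. -/
noncomputable def countRPN {n : ℕ} (P : RPN n → Prop) : ℕ :=
  Nat.card (Quot (fun a b : {N : RPN n // P N} => RPN.Iso a.1 b.1))

section aux
variable {V : Type*}

lemma last_sat (S : V → Prop) :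
    ∀ l : List V, (∃ x ∈ l, S x) → ∃ s a t, l = s ++ a :: t ∧ S a ∧ ∀ x ∈ t, ¬ S x := by
  intro l
  induction l with
  | nil => simp
  | cons b tl ih =>
    intro hex
    by_cases h : ∃ x ∈ tl, S x
    · obtain ⟨s, a, t, heq, hS, ht⟩ := ih h
      exact ⟨b :: s, a, t, by simp [heq], hS, ht⟩
    · have hb : S b := by
        rcases hex with ⟨x, hx, hSx⟩
        rcases List.mem_cons.1 hx with rfl | hx'
        · exact hSx
        · exact absurd ⟨x, hx', hSx⟩ h
      exact ⟨[], b, tl, rfl, hb, fun x hx hSx => h ⟨x, hx, hSx⟩⟩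

lemma chain_reach {E : V → V → Prop} :
    ∀ (l : List V) (x z : V), List.Chain' E l → x ∈ l → l.getLast? = some z →
      Relation.ReflTransGen E x z := by
  intro l
  induction l with
  | nil => simp
  | cons b t ih =>
    intro x z hc hx hlast
    cases t with
    | nil =>
      simp at hx hlast
      subst hx; subst hlast; exact Relation.ReflTransGen.refl
    | cons c t' =>
      have hE : E b c := (List.isChain_cons_cons.1 hc).1
      have hc' : List.Chain' E (c :: t') := (List.isChain_cons_cons.1 hc).2
      have hlast' : (c :: t').getLast? = some z := by
        rwa [List.getLast?_cons_cons] at hlast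
      rcases List.mem_cons.1 hx with rfl | hx'
      · exact Relation.ReflTransGen.head hE (ih c z hc' (by simp) hlast')
      · exact ih x z hc' hx' hlast'

lemma pedges_last {v x : V} :
    ∀ (w : List V), v ∉ w → (x, v) ∈ pEdges (w ++ [v]) → w.getLast? = some x := by
  intro w
  induction w with
  | nil => intro _ h; simp [pEdges] at h
  | cons b w' ih =>
    intro hv h
    cases w' with
    | nil =>
      simp [pEdges, List.zip] at h
      simp [h]
    | cons c w'' =>
      have : pEdges ((b :: c :: w'') ++ [v]) = (b, c) :: pEdges ((c :: w'') ++ [v]) := by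
        simp [pEdges]
      rw [this] at h
      rcases List.mem_cons.1 h with heq | h'
      · exfalso
        have : v = c := congrArg Prod.snd heq
        exact hv (by simp [this])
      · have hv' : v ∉ c :: w'' := fun hmem => hv (List.mem_cons_of_mem _ hmem)
        have := ih hv' h'
        rw [List.getLast?_cons_cons]
        exact this

end aux

/-- A binary rooted phylogenetic network in which every
reticulate node has exactly one leaf descendant, namely its child (every
child of a reticulate node is a leaf, and every leaf descendant of a
reticulate node is a child of it), is a 1-galled network: it is galled and
has exactly one tree-component. -/

theorem stmt12 (n : ℕ) (N : RPN n)
    (hchild : ∀ v, IsRet N v → ∀ w, N.E v w → IsLeaf N w)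
    (hdesc : ∀ v, IsRet N v → ∀ w, IsLeaf N w →
      Relation.ReflTransGen N.E v w → N.E v w) :
    Galled N ∧ OneTC N := by
  haveI := N.fin
  -- well-foundedness of E
  have hwf : WellFounded N.E := by
    have htg : WellFounded (Relation.TransGen N.E) := by
      haveI : IsTrans N.V (Relation.TransGen N.E) := ⟨fun _ _ _ => Relation.TransGen.trans⟩
      haveI : IsIrrefl N.V (Relation.TransGen N.E) := ⟨N.acyclic⟩
      exact Finite.wellFounded_of_trans_of_irrefl _
    exact Subrelation.wf (fun {x y} h => Relation.TransGen.single h) htg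
  -- root is treeish
  have hroot : treeish N N.root := by
    constructor
    · intro hret
      have := N.root_in
      rw [hret.1] at this
      exact absurd this (by norm_num)
    · intro hleaf
      have := (N.lab_leaf N.root).1 hleaf
      rw [N.root_in] at this
      exact absurd this.1 (by norm_num)
  -- every treeish non-root node has a treeish parent
  have hparent : ∀ u, treeish N u → u ≠ N.root → ∃ p, N.E p u ∧ treeish N p := by
    intro u hu hne
    have hnone : N.lab u = none := by
      cases h : N.lab u with
      | none => rfl
      | some x => exact absurd (by simp [h] : (N.lab u).isSome) hu.2
    have hind : indeg N.E u = 1 := by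
      rcases N.nodes u hne hnone with h | h
      · exact h.1
      · exact absurd h hu.1
    have hne0 : Nat.card {w // N.E w u} ≠ 0 := by rw [show Nat.card {w // N.E w u} = indeg N.E u from rfl, hind]; norm_num
    obtain ⟨⟨p, hp⟩⟩ := (Nat.card_ne_zero.1 hne0).1
    refine ⟨p, hp, ?_, ?_⟩
    · intro hret
      have hleaf := hchild p hret u hp
      exact hu.2 hleaf
    · intro hleaf
      have hout := ((N.lab_leaf p).1 hleaf).2
      have : Nat.card {w // N.E p w} ≠ 0 := Nat.card_ne_zero.2 ⟨⟨⟨u, hp⟩⟩, inferInstance⟩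
      exact this hout
  -- canonical treeish path from the root to any treeish node
  have key : ∀ u, treeish N u → ∃ P : List N.V, List.Chain' N.E P ∧ P.Nodup ∧
      P.head? = some N.root ∧ P.getLast? = some u ∧ ∀ x ∈ P, treeish N x := by
    intro u
    induction u using WellFounded.induction hwf with
    | _ u ih =>
    intro hu
    by_cases hne : u = N.root
    · subst hne
      exact ⟨[N.root], List.isChain_singleton _, by simp, by simp, by simp, by simpa using hu⟩
    · obtain ⟨p, hp, hpt⟩ := hparent u hu hne
      obtain ⟨P', hc, hnd, hh, hl, htr⟩ := ih p hp hpt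
      have hune : u ∉ P' := by
        intro hmem
        have : Relation.ReflTransGen N.E u p := chain_reach P' u p hc hmem hl
        exact N.acyclic u (Relation.TransGen.tail' this hp)
      have hP'ne : P' ≠ [] := by intro h; rw [h] at hh; simp at hh
      refine ⟨P' ++ [u], ?_, ?_, ?_, ?_, ?_⟩
      · apply List.isChain_append.2
        refine ⟨hc, by simp, ?_⟩
        intro x hx y hy
        simp at hy
        rw [hl] at hx
        simp at hx
        subst hx; subst hy; exact hp
      · rw [List.nodup_append]
        exact ⟨hnd, by simp, fun x hx y hy => by simp at hy; subst hy; exact fun h => hune (h ▸ hx)⟩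
      · rw [List.head?_append_of_ne_nil _ hP'ne]; exact hh
      · simp [List.getLast?_concat]
      · intro x hx
        rcases List.mem_append.1 hx with h | h
        · exact htr x h
        · simp at h; subst h; exact hu
  constructor
  · -- Galled
    intro v hv
    -- two distinct treeish parents
    have h2 : Nat.card {u // N.E u v} = 2 := hv.1
    obtain ⟨⟨p₁, hp₁⟩, ⟨p₂, hp₂⟩, hnep, -⟩ := Nat.card_eq_two_iff.1 h2
    have hpne : p₁ ≠ p₂ := fun h => hnep (by simpa using h)
    have hvnl : ¬ IsLeaf N v := by
      intro hleaf
      have := ((N.lab_leaf v).1 hleaf).2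
      rw [hv.2] at this; exact absurd this (by norm_num)
    have htp : ∀ p, N.E p v → treeish N p := by
      intro p hp
      refine ⟨?_, ?_⟩
      · intro hret
        exact absurd (hchild p hret v hp) (by
          intro hleaf
          have := ((N.lab_leaf v).1 hleaf).2
          rw [hv.2] at this; exact absurd this (by norm_num))
      · intro hleaf
        have hout := ((N.lab_leaf p).1 hleaf).2
        exact (Nat.card_ne_zero.2 ⟨⟨⟨v, hp⟩⟩, inferInstance⟩) hout
    obtain ⟨P₁, hc₁, hnd₁, hh₁, hl₁, htr₁⟩ := key p₁ (htp p₁ hp₁)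
    obtain ⟨P₂, hc₂, hnd₂, hh₂, hl₂, htr₂⟩ := key p₂ (htp p₂ hp₂)
    -- last vertex of P₁ lying on P₂
    have hex : ∃ x ∈ P₁, x ∈ P₂ := by
      refine ⟨N.root, ?_, ?_⟩
      · exact List.mem_of_mem_head? (by rw [hh₁]; simp)
      · exact List.mem_of_mem_head? (by rw [hh₂]; simp)
    obtain ⟨s₁, a, t₁, hsplit₁, haP₂, ht₁⟩ := last_sat (· ∈ P₂) P₁ hex
    obtain ⟨s₂, t₂, hsplit₂⟩ := List.append_of_mem haP₂
    -- the two galls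
    have hlast₁ : (a :: t₁).getLast? = some p₁ := by
      rw [hsplit₁, List.getLast?_append] at hl₁
      cases h : (a :: t₁).getLast? with
      | none => simp at h
      | some w => rw [h] at hl₁; simp at hl₁; simp [hl₁]
    have hlast₂ : (a :: t₂).getLast? = some p₂ := by
      rw [hsplit₂, List.getLast?_append] at hl₂
      cases h : (a :: t₂).getLast? with
      | none => simp at h
      | some w => rw [h] at hl₂; simp at hl₂; simp [hl₂]
    have hmem₁ : ∀ x ∈ a :: t₁, x ∈ P₁ := by
      intro x hx; rw [hsplit₁]; exact List.mem_append_right _ hx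
    have hmem₂ : ∀ x ∈ a :: t₂, x ∈ P₂ := by
      intro x hx; rw [hsplit₂]; exact List.mem_append_right _ hx
    have hvn₁ : v ∉ a :: t₁ := by
      intro h; exact (htr₁ v (hmem₁ v h)).1 hv
    have hvn₂ : v ∉ a :: t₂ := by
      intro h; exact (htr₂ v (hmem₂ v h)).1 hv
    have hndat₁ : (a :: t₁).Nodup := by
      rw [hsplit₁] at hnd₁; exact hnd₁.of_append_right
    have hndat₂ : (a :: t₂).Nodup := by
      rw [hsplit₂] at hnd₂; exact hnd₂.of_append_right
    have hchat₁ : List.Chain' N.E (a :: t₁) := by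
      rw [hsplit₁] at hc₁; exact (List.isChain_append.1 hc₁).2.1
    have hchat₂ : List.Chain' N.E (a :: t₂) := by
      rw [hsplit₂] at hc₂; exact (List.isChain_append.1 hc₂).2.1
    refine ⟨a, (a :: t₁) ++ [v], (a :: t₂) ++ [v], ⟨?_, ?_⟩, ⟨?_, ?_⟩, ?_, ?_, ?_, ?_, ?_, ?_, ?_, ?_, ?_⟩
    · apply List.isChain_append.2
      refine ⟨hchat₁, by simp, ?_⟩
      intro x hx y hy
      rw [hlast₁] at hx; simp at hx hy; subst hx; subst hy; exact hp₁
    · rw [List.nodup_append]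
      exact ⟨hndat₁, by simp, fun x hx y hy => by simp at hy; subst hy; exact fun h => hvn₁ (h ▸ hx)⟩
    · apply List.isChain_append.2
      refine ⟨hchat₂, by simp, ?_⟩
      intro x hx y hy
      rw [hlast₂] at hx; simp at hx hy; subst hx; subst hy; exact hp₂
    · rw [List.nodup_append]
      exact ⟨hndat₂, by simp, fun x hx y hy => by simp at hy; subst hy; exact fun h => hvn₂ (h ▸ hx)⟩
    · simp
    · simp
    · exact List.getLast?_concat
    · exact List.getLast?_concat
    · simp
    · simp
    · -- edge-disjointness
      rintro ⟨x, y⟩ hep heq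
      have hy₁ : y ∈ (a :: t₁ ++ [v]).tail := (List.of_mem_zip hep).2
      have hy₂ : y ∈ (a :: t₂ ++ [v]).tail := (List.of_mem_zip heq).2
      simp only [List.cons_append, List.tail_cons] at hy₁ hy₂
      by_cases hyv : y = v
      · subst hyv
        have hx₁ := pedges_last (a :: t₁) hvn₁ hep
        have hx₂ := pedges_last (a :: t₂) hvn₂ heq
        rw [hlast₁] at hx₁; rw [hlast₂] at hx₂
        simp at hx₁ hx₂
        exact hpne (hx₁.trans hx₂.symm)
      · have hyt₁ : y ∈ t₁ := by
          rcases List.mem_append.1 hy₁ with h | h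
          · exact h
          · simp at h; exact absurd h hyv
        have hyt₂ : y ∈ t₂ := by
          rcases List.mem_append.1 hy₂ with h | h
          · exact h
          · simp at h; exact absurd h hyv
        exact ht₁ y hyt₁ (hmem₂ y (List.mem_cons_of_mem a hyt₂))
    · intro x hx hret
      rcases List.mem_append.1 hx with h | h
      · exact absurd hret (htr₁ x (hmem₁ x h)).1
      · simpa using h
    · intro x hx hret
      rcases List.mem_append.1 hx with h | h
      · exact absurd hret (htr₂ x (hmem₂ x h)).1
      · simpa using h
  · -- OneTC
    have tc : ∀ u, ∀ hu : treeish N u, sameTC N ⟨N.root, hroot⟩ ⟨u, hu⟩ := by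
      intro u
      induction u using WellFounded.induction hwf with
      | _ u ih =>
      intro hu
      by_cases hne : u = N.root
      · subst hne; exact Relation.ReflTransGen.refl
      · obtain ⟨p, hp, hpt⟩ := hparent u hu hne
        exact Relation.ReflTransGen.tail (ih p hp hpt) (Or.inl hp)
    intro u w
    have hsymm : Symmetric (fun a b : {x : N.V // treeish N x} => N.E a.1 b.1 ∨ N.E b.1 a.1) :=
      fun a b h => h.symm
    exact Relation.ReflTransGen.trans
      (@Std.Symm.symm _ _ (@Relation.ReflTransGen.stdSymm _ _ ⟨fun a b h => hsymm h⟩) _ _ (tc u.1 u.2)) (tc w.1 w.2)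
end

section
/- A binary rooted phylogenetic network is galled if and only if every reticulate node is inner (both of its parents belong to a common tree-component). -/
/-- A reticulate node `v` is inner: both of its parents are non-leaf,
non-reticulate nodes lying in a common tree-component. -/
noncomputable def InnerRet {n : ℕ} (N : RPN n) (v : N.V) : Prop :=
  ∀ p₁ p₂, N.E p₁ v → N.E p₂ v →
    ∃ (h₁ : treeish N p₁) (h₂ : treeish N p₂), sameTC N ⟨p₁, h₁⟩ ⟨p₂, h₂⟩


section Lists
variable {α : Type*} {r : α → α → Prop}

lemma chain_transGen {a b : α} {l : List α} (h : List.Chain r a l) (hb : b ∈ l) :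
    Relation.TransGen r a b := by
  induction l generalizing a with
  | nil => simp at hb
  | cons c t ih =>
    simp only [List.Chain, List.chain_cons] at h
    rcases List.mem_cons.1 hb with rfl | hb
    · exact Relation.TransGen.single h.1
    · exact Relation.TransGen.head h.1 (ih h.2 hb)

lemma chain_nodup (hac : ∀ x, ¬ Relation.TransGen r x x) {a : α} {l : List α}
    (h : List.Chain r a l) : (a :: l).Nodup := by
  induction l generalizing a with
  | nil => simp
  | cons c t ih =>
    simp only [List.Chain, List.chain_cons] at h
    refine List.nodup_cons.2 ⟨fun hmem => ?_, ih h.2⟩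
    exact hac a (chain_transGen (List.chain_cons.2 h) hmem)

lemma chain_rtg {w y : α} {l : List α} (hc : List.Chain r w l)
    (hl : (w :: l).getLast? = some y) : Relation.ReflTransGen r w y := by
  induction l generalizing w with
  | nil => simp at hl; subst hl; rfl
  | cons c t ih =>
    simp only [List.Chain, List.chain_cons] at hc
    exact Relation.ReflTransGen.head hc.1 (ih hc.2 (by rw [← hl, List.getLast?_cons_cons]))

lemma chain_prefix {a b : α} {l : List α} (h : List.Chain r a l) (hb : b ∈ a :: l) :
    ∃ l', l' <+: l ∧ List.Chain r a l' ∧ (a :: l').getLast? = some b := by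
  induction l generalizing a with
  | nil =>
    simp at hb; subst hb
    exact ⟨[], List.prefix_refl _, List.Chain.nil, rfl⟩
  | cons c t ih =>
    rcases List.mem_cons.1 hb with rfl | hb
    · exact ⟨[], List.nil_prefix, List.Chain.nil, rfl⟩
    · simp only [List.Chain, List.chain_cons] at h
      obtain ⟨l', hp, hc, hl⟩ := ih h.2 hb
      exact ⟨c :: l', by simpa using hp, List.chain_cons.2 ⟨h.1, hc⟩,
        by rw [List.getLast?_cons_cons]; exact hl⟩

lemma chain_suffix {a b : α} {l : List α} (h : List.Chain r a l) (hb : b ∈ a :: l) :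
    ∃ l', List.Chain r b l' ∧ (b :: l').getLast? = (a :: l).getLast? := by
  induction l generalizing a with
  | nil => simp at hb; subst hb; exact ⟨[], List.Chain.nil, rfl⟩
  | cons c t ih =>
    rcases List.mem_cons.1 hb with rfl | hb
    · exact ⟨c :: t, h, rfl⟩
    · simp only [List.Chain, List.chain_cons] at h
      obtain ⟨l', hc, hl⟩ := ih h.2 hb
      exact ⟨l', hc, by rw [hl, List.getLast?_cons_cons]⟩

lemma chain_pred {a b : α} {l : List α} (h : List.Chain r a l) (hb : b ∈ l) :
    ∃ c ∈ a :: l, r c b := by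
  induction l generalizing a with
  | nil => simp at hb
  | cons c t ih =>
    simp only [List.Chain, List.chain_cons] at h
    rcases List.mem_cons.1 hb with rfl | hb
    · exact ⟨a, by simp, h.1⟩
    · obtain ⟨d, hd, hr⟩ := ih h.2 hb
      refine ⟨d, ?_, hr⟩
      simp only [List.mem_cons] at hd ⊢
      tauto

lemma chain_concat {w y x : α} {l : List α} (hc : List.Chain r w l)
    (hl : (w :: l).getLast? = some y) (hr : r y x) : List.Chain r w (l ++ [x]) := by
  induction l generalizing w with
  | nil => simp at hl; subst hl; exact List.chain_cons.2 ⟨hr, List.Chain.nil⟩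
  | cons c t ih =>
    simp only [List.Chain, List.chain_cons] at hc
    exact List.chain_cons.2 ⟨hc.1, ih hc.2 (by rw [← hl, List.getLast?_cons_cons])⟩

lemma pEdges_concat {l : List α} {v : α} (h : l ≠ []) :
    pEdges (l ++ [v]) = pEdges l ++ [(l.getLast h, v)] := by
  induction l with
  | nil => simp at h
  | cons a t ih =>
    cases t with
    | nil => simp [pEdges]
    | cons b t' =>
      have h2 : (b :: t') ≠ [] := by simp
      have : pEdges ((a :: b :: t') ++ [v]) = (a, b) :: pEdges ((b :: t') ++ [v]) := rfl
      rw [this, ih h2]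
      simp [pEdges, List.getLast_cons]

lemma snd_mem_tail_of_mem_pEdges {l : List α} {e : α × α} (h : e ∈ pEdges l) : e.2 ∈ l.tail := by
  obtain ⟨x, y⟩ := e
  exact (List.of_mem_zip h).2

lemma chain'_out {l : List α} {v x : α} (h : List.Chain' r (l ++ [v])) (hx : x ∈ l) :
    ∃ y, r x y := by
  induction l with
  | nil => simp at hx
  | cons a t ih =>
    simp only [List.Chain', List.cons_append, List.isChain_cons] at h
    rcases List.mem_cons.1 hx with rfl | hx
    · cases t with
      | nil => exact ⟨v, h.1 v rfl⟩
      | cons b t' => exact ⟨b, h.1 b rfl⟩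
    · exact ih h.2 hx

lemma fork_of_connected (hac : ∀ x : α, ¬ Relation.TransGen r x x)
    (huniq : ∀ {a b c : α}, r a c → r b c → a = b) {u v : α}
    (h : Relation.ReflTransGen (fun a b => r a b ∨ r b a) u v) :
    ∃ (w : α) (l₁ l₂ : List α), List.Chain r w l₁ ∧ List.Chain r w l₂ ∧
      (w :: l₁).getLast? = some u ∧ (w :: l₂).getLast? = some v ∧ l₁.Disjoint l₂ := by
  induction h using Relation.ReflTransGen.head_induction_on with
  | refl => exact ⟨v, [], [], .nil, .nil, rfl, rfl, by simp [List.Disjoint]⟩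
  | @head x y hstep hrest ih =>
    obtain ⟨w, l₁, l₂, hc₁, hc₂, hl₁, hl₂, hd⟩ := ih
    rcases hstep with hxy | hyx
    · -- r x y : x is the parent of y
      by_cases hx : x ∈ w :: l₁
      · obtain ⟨l', hp, hc, hl⟩ := chain_prefix hc₁ hx
        exact ⟨w, l', l₂, hc, hc₂, hl, hl₂, fun {a} ha hb => hd (hp.sublist.subset ha) hb⟩
      · cases l₁ with
        | nil =>
          simp only [List.getLast?_singleton, Option.some_inj] at hl₁
          subst hl₁
          refine ⟨x, [], w :: l₂, .nil, List.chain_cons.2 ⟨hxy, hc₂⟩, rfl, ?_, by simp [List.Disjoint]⟩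
          rw [List.getLast?_cons_cons]; exact hl₂
        | cons c t =>
          exfalso
          have hy : y ∈ c :: t := by
            rw [List.getLast?_cons_cons, List.getLast?_eq_getLast (l := c :: t) (by simp), Option.some_inj] at hl₁
            exact hl₁ ▸ List.getLast_mem (by simp)
          obtain ⟨d, hdmem, hdy⟩ := chain_pred hc₁ hy
          exact hx ((huniq hdy hxy) ▸ hdmem)
    · -- r y x : y is the parent of x
      have hxw : x ≠ w := by
        rintro rfl
        exact hac x (Relation.TransGen.tail' (chain_rtg hc₁ hl₁) hyx)
      by_cases hx : x ∈ l₂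
      · obtain ⟨l', hc, hl⟩ := chain_suffix hc₂ (List.mem_cons_of_mem _ hx)
        exact ⟨x, [], l', .nil, hc, rfl, hl.trans hl₂, by simp [List.Disjoint]⟩
      · refine ⟨w, l₁ ++ [x], l₂, chain_concat hc₁ hl₁ hyx, hc₂, ?_, hl₂, ?_⟩
        · rw [← List.cons_append]; exact List.getLast?_concat
        · rw [List.disjoint_append_left]
          exact ⟨hd, by simpa [List.Disjoint] using hx⟩

end Lists

section Net
variable {n : ℕ} (N : RPN n)

lemma edge_irrefl {v : N.V} (h : N.E v v) : False := N.acyclic v (.single h)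

lemma not_leaf_of_edge {u v : N.V} (h : N.E u v) : ¬ IsLeaf N u := by
  intro hl
  rw [IsLeaf, N.lab_leaf] at hl
  have hfin := N.fin
  have : outdeg N.E u ≠ 0 := Nat.card_ne_zero.2 ⟨⟨⟨v, h⟩⟩, inferInstance⟩
  exact this hl.2

lemma parent_unique {v a b : N.V} (ht : treeish N v) (ha : N.E a v) (hb : N.E b v) : a = b := by
  have hfin := N.fin
  have hne : indeg N.E v ≠ 0 := Nat.card_ne_zero.2 ⟨⟨⟨a, ha⟩⟩, inferInstance⟩
  have h1 : indeg N.E v = 1 := by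
    by_cases hr : v = N.root
    · exact absurd (hr ▸ N.root_in) hne
    · rcases hlab : N.lab v with _ | x
      · rcases N.nodes v hr hlab with h | h
        · exact h.1
        · exact absurd ⟨h.1, h.2⟩ ht.1
      · exact absurd (by rw [IsLeaf, hlab]; rfl) ht.2
  have hsub := (Nat.card_eq_one_iff_unique.1 h1).1
  exact Subtype.ext_iff.1 (hsub.elim ⟨a, ha⟩ ⟨b, hb⟩)

lemma ret_parents {v : N.V} (h : IsRet N v) :
    ∃ a b : N.V, a ≠ b ∧ N.E a v ∧ N.E b v := by
  obtain ⟨x, y, hxy, -⟩ := Nat.card_eq_two_iff.1 h.1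
  exact ⟨x.1, y.1, fun he => hxy (Subtype.ext he), x.2, y.2⟩

lemma parent_cases {v : N.V} (hv : IsRet N v) {a b c : N.V} (hab : a ≠ b)
    (ha : N.E a v) (hb : N.E b v) (hc : N.E c v) : c = a ∨ c = b := by
  obtain ⟨x, y, hxy, huniv⟩ := Nat.card_eq_two_iff.1 hv.1
  have key : ∀ z : {u // N.E u v}, z = x ∨ z = y := fun z => by
    have : z ∈ ({x, y} : Set _) := huniv ▸ Set.mem_univ z
    simpa using this
  rcases key ⟨a, ha⟩ with h1 | h1 <;> rcases key ⟨b, hb⟩ with h2 | h2 <;>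
    rcases key ⟨c, hc⟩ with h3 | h3 <;>
    first
      | (exact absurd (Subtype.ext_iff.1 (h1.trans h2.symm)) hab)
      | (exact Or.inl (Subtype.ext_iff.1 (h3.trans h1.symm)))
      | (exact Or.inr (Subtype.ext_iff.1 (h3.trans h2.symm)))

lemma sameTC_symm {u v : {x : N.V // treeish N x}} (h : sameTC N u v) : sameTC N v u := by
  induction h with
  | refl => exact .refl
  | tail hs hbc ih => exact Relation.ReflTransGen.head (Or.symm hbc) ih

lemma sameTC_of_chain {l : List N.V} (hc : List.Chain' N.E l) (ht : ∀ x ∈ l, treeish N x)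
    {a b : N.V} (ha : l.head? = some a) (hb : l.getLast? = some b) :
    ∃ (h₁ : treeish N a) (h₂ : treeish N b), sameTC N ⟨a, h₁⟩ ⟨b, h₂⟩ := by
  induction l generalizing a with
  | nil => simp at ha
  | cons c t ih =>
    simp only [List.head?_cons, Option.some_inj] at ha
    subst ha
    cases t with
    | nil =>
      simp only [List.getLast?_singleton, Option.some_inj] at hb
      subst hb
      exact ⟨ht _ (by simp), ht _ (by simp), .refl⟩
    | cons d t' =>
      simp only [List.Chain', List.isChain_cons_cons] at hc
      obtain ⟨h₂, h₃, hst⟩ := ih hc.2 (fun x hx => ht x (List.mem_cons_of_mem _ hx)) rfl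
        (by rw [← hb, List.getLast?_cons_cons])
      exact ⟨ht _ (by simp), h₃, Relation.ReflTransGen.head (Or.inl hc.1) hst⟩

lemma path_anal {p : List N.V} {a v : N.V} (hv : IsRet N v)
    (hp : IsDiPath N.E p) (hpa : p.head? = some a) (hpv : p.getLast? = some v)
    (hp2 : 2 ≤ p.length) (hpr : ∀ x ∈ p, IsRet N x → x = v) :
    ∃ (d : List N.V) (b : N.V), p = d ++ [v] ∧ d ≠ [] ∧ d.getLast? = some b ∧ N.E b v ∧
      (∀ x ∈ d, treeish N x) ∧ d.head? = some a ∧ List.Chain' N.E d ∧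
      (b, v) ∈ pEdges p := by
  have hpne : p ≠ [] := by rintro rfl; simp at hpv
  have hvlast : p.getLast hpne = v := by
    rw [List.getLast?_eq_getLast hpne, Option.some_inj] at hpv
    exact hpv
  have hpd0 : p.dropLast ++ [v] = p := by
    conv_rhs => rw [← List.dropLast_append_getLast hpne]
    rw [hvlast]
  obtain ⟨d, hpd⟩ : ∃ d, d ++ [v] = p := ⟨p.dropLast, hpd0⟩
  have hdne : d ≠ [] := by
    rintro rfl
    rw [← hpd] at hp2
    simp at hp2
  obtain ⟨b, hdlast⟩ : ∃ b, d.getLast? = some b :=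
    ⟨d.getLast hdne, List.getLast?_eq_getLast hdne⟩
  have hbl : d.getLast hdne = b := by
    rw [List.getLast?_eq_getLast hdne, Option.some_inj] at hdlast
    exact hdlast
  have hchain : List.Chain' N.E (d ++ [v]) := by rw [hpd]; exact hp.1
  have hEbv : N.E b v := by
    obtain ⟨-, -, h3⟩ := List.isChain_append.1 hchain
    exact h3 b hdlast v rfl
  have hvnotd : v ∉ d := by
    have hnd : (d ++ [v]).Nodup := by rw [hpd]; exact hp.2
    intro hmem
    exact (List.nodup_append.1 hnd).2.2 v hmem v (by simp) rfl
  have htree : ∀ x ∈ d, treeish N x := by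
    intro x hx
    obtain ⟨y, hy⟩ := chain'_out hchain hx
    refine ⟨fun hret => ?_, not_leaf_of_edge N hy⟩
    exact hvnotd (hpr x (by rw [← hpd]; exact List.mem_append_left _ hx) hret ▸ hx)
  have hhead : d.head? = some a := by
    rw [← hpd] at hpa
    cases d with
    | nil => exact absurd rfl hdne
    | cons c t => simpa using hpa
  have hmem : (b, v) ∈ pEdges p := by
    rw [← hpd, pEdges_concat hdne, hbl]
    exact List.mem_append_right _ (by simp)
  exact ⟨d, b, hpd.symm, hdne, hdlast, hEbv, htree, hhead, hchain.left_of_append, hmem⟩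


lemma build_path {v : N.V} (hv : IsRet N v) {p₁ : N.V}
    (he₁ : N.E p₁ v) {w : {x : N.V // treeish N x}} {l₁ : List {x : N.V // treeish N x}}
    (h₁ : treeish N p₁)
    (hc₁ : List.Chain (fun a b : {x : N.V // treeish N x} => N.E a.1 b.1) w l₁)
    (hl₁ : (w :: l₁).getLast? = some ⟨p₁, h₁⟩) :
    IsDiPath N.E ((w.1 :: l₁.map Subtype.val) ++ [v]) ∧
    ((w.1 :: l₁.map Subtype.val) ++ [v]).head? = some w.1 ∧
    ((w.1 :: l₁.map Subtype.val) ++ [v]).getLast? = some v ∧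
    2 ≤ ((w.1 :: l₁.map Subtype.val) ++ [v]).length ∧
    pEdges ((w.1 :: l₁.map Subtype.val) ++ [v]) = pEdges (w.1 :: l₁.map Subtype.val) ++ [(p₁, v)] ∧
    (∀ x ∈ (w.1 :: l₁.map Subtype.val) ++ [v], IsRet N x → x = v) := by
  have chainV : List.Chain N.E w.1 (l₁.map Subtype.val) := (List.isChain_map (l := w :: l₁) Subtype.val).2 hc₁
  have hxs : w.1 :: l₁.map Subtype.val = (w :: l₁).map Subtype.val := rfl
  have lastxs : (w.1 :: l₁.map Subtype.val).getLast? = some p₁ := by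
    rw [hxs, List.getLast?_map, hl₁]; rfl
  have hxsne : w.1 :: l₁.map Subtype.val ≠ [] := by simp
  have htreexs : ∀ x ∈ w.1 :: l₁.map Subtype.val, treeish N x := by
    rw [hxs]
    intro x hx
    obtain ⟨y, -, rfl⟩ := List.mem_map.1 hx
    exact y.2
  have hvnot : v ∉ w.1 :: l₁.map Subtype.val := fun hmem => (htreexs v hmem).1 hv
  refine ⟨⟨?_, ?_⟩, by simp, List.getLast?_concat, by simp, ?_, ?_⟩
  · refine List.isChain_append.2 ⟨chainV, by simp, ?_⟩
    intro x hx y hy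
    rw [lastxs, Option.mem_def, Option.some_inj] at hx
    simp only [List.head?_cons, Option.mem_def, Option.some_inj] at hy
    subst hx; subst hy; exact he₁
  · refine List.nodup_append.2 ⟨chain_nodup N.acyclic chainV, by simp, ?_⟩
    intro a ha _ hb rfl
    simp only [List.mem_singleton] at hb
    subst hb
    exact hvnot ha
  · rw [pEdges_concat hxsne]
    have : (w.1 :: l₁.map Subtype.val).getLast hxsne = p₁ := by
      rw [List.getLast?_eq_getLast hxsne, Option.some_inj] at lastxs
      exact lastxs
    rw [this]
  · intro x hx hret
    rcases List.mem_append.1 hx with h | h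
    · exact absurd hret (htreexs x h).1
    · simpa using h

end Net
/-- A binary rooted phylogenetic network is galled if and only
if every reticulate node is inner. -/
theorem stmt13 (n : ℕ) (N : RPN n) :
    Galled N ↔ ∀ v, IsRet N v → InnerRet N v := by
  constructor
  · intro hg v hv
    obtain ⟨a, p, q, hp, hq, hpa, hqa, hpv, hqv, hp2, hq2, hdisj, hpr, hqr⟩ := hg v hv
    obtain ⟨d₁, b₁, hpd₁, hdne₁, hdl₁, hEb₁, ht₁, hh₁, hc₁, hm₁⟩ :=
      path_anal N hv hp hpa hpv hp2 hpr
    obtain ⟨d₂, b₂, hpd₂, hdne₂, hdl₂, hEb₂, ht₂, hh₂, hc₂, hm₂⟩ :=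
      path_anal N hv hq hqa hqv hq2 hqr
    have hbne : b₁ ≠ b₂ := by rintro rfl; exact hdisj _ hm₁ hm₂
    obtain ⟨ha₁, hb₁t, s₁⟩ := sameTC_of_chain N hc₁ ht₁ hh₁ hdl₁
    obtain ⟨ha₂, hb₂t, s₂⟩ := sameTC_of_chain N hc₂ ht₂ hh₂ hdl₂
    have s₁₂ : sameTC N ⟨b₁, hb₁t⟩ ⟨b₂, hb₂t⟩ := (sameTC_symm N s₁).trans s₂
    intro p₁ p₂ hp₁ hp₂
    rcases parent_cases N hv hbne hEb₁ hEb₂ hp₁ with rfl | rfl <;>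
      rcases parent_cases N hv hbne hEb₁ hEb₂ hp₂ with rfl | rfl
    · exact ⟨hb₁t, hb₁t, .refl⟩
    · exact ⟨hb₁t, hb₂t, s₁₂⟩
    · exact ⟨hb₂t, hb₁t, sameTC_symm N s₁₂⟩
    · exact ⟨hb₂t, hb₂t, .refl⟩
  · intro hi v hv
    obtain ⟨p₁, p₂, hne, he₁, he₂⟩ := ret_parents N hv
    obtain ⟨h₁, h₂, hst⟩ := hi v hv p₁ p₂ he₁ he₂
    have hac : ∀ x : {x : N.V // treeish N x},
        ¬ Relation.TransGen (fun a b : {x : N.V // treeish N x} => N.E a.1 b.1) x x :=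
      fun x hx => N.acyclic x.1 (Relation.TransGen.lift Subtype.val (fun _ _ h => h) _ _ hx)
    have huniq : ∀ {a b c : {x : N.V // treeish N x}}, N.E a.1 c.1 → N.E b.1 c.1 → a = b :=
      fun {a b c} ha hb => Subtype.ext (parent_unique N c.2 ha hb)
    obtain ⟨w, l₁, l₂, hc₁, hc₂, hl₁, hl₂, hdisj⟩ :=
      fork_of_connected (r := fun a b : {x : N.V // treeish N x} => N.E a.1 b.1) hac huniq hst
    obtain ⟨A1, A2, A3, A4, A5, A6⟩ := build_path N hv he₁ h₁ hc₁ hl₁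
    obtain ⟨B1, B2, B3, B4, B5, B6⟩ := build_path N hv he₂ h₂ hc₂ hl₂
    refine ⟨w.1, _, _, A1, B1, A2, B2, A3, B3, A4, B4, ?_, A6, B6⟩
    intro e he₁' he₂'
    rw [A5] at he₁'
    rw [B5] at he₂'
    rcases List.mem_append.1 he₁' with h1 | h1 <;> rcases List.mem_append.1 he₂' with h2 | h2
    · have m1 := snd_mem_tail_of_mem_pEdges h1
      have m2 := snd_mem_tail_of_mem_pEdges h2
      simp only [List.tail_cons, List.mem_map] at m1 m2
      obtain ⟨x1, hx1, hx1e⟩ := m1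
      obtain ⟨x2, hx2, hx2e⟩ := m2
      have hx12 : x1 = x2 := Subtype.ext (hx1e.trans hx2e.symm)
      exact hdisj hx1 (hx12 ▸ hx2)
    · simp only [List.mem_singleton] at h2
      subst h2
      have m1 := snd_mem_tail_of_mem_pEdges h1
      simp only [List.tail_cons, List.mem_map] at m1
      obtain ⟨x1, hx1, hx1e⟩ := m1
      exact (hx1e ▸ x1.2).1 hv
    · simp only [List.mem_singleton] at h1
      subst h1
      have m2 := snd_mem_tail_of_mem_pEdges h2
      simp only [List.tail_cons, List.mem_map] at m2
      obtain ⟨x2, hx2, hx2e⟩ := m2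
      exact (hx2e ▸ x2.2).1 hv
    · simp only [List.mem_singleton] at h1 h2
      rw [h1] at h2
      exact hne (congrArg Prod.fst h2)
end
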